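/- arXiv:0711.3242 — 2 statements merged into one kernel-verified Lean document; each statement's English description precedes it below -/
import Mathlib

section
/- The right-sided Bregman centroid, i.e., the unique minimizer over q ∈ X of (1/n)∑_{i=1}^n D_F(p_i‖q), is the center of mass p̄ = (1/n)∑_{i=1}^n p_i, independently of the choice of the generator F. -/
open scoped RealInnerProductSpace

/-- Bregman divergence of a generator `F` with gradient map `F'`. -/
noncomputable def bregman {d : ℕ}
    (F : EuclideanSpace ℝ (Fin d) → ℝ)
    (F' : EuclideanSpace ℝ (Fin d) → EuclideanSpace ℝ (Fin d))
    (p q : EuclideanSpace ℝ (Fin d)) : ℝ :=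
  F p - F q - ⟪p - q, F' q⟫

/-!
Bregman's three-point identity `D(p, q) = D(p, p̄) + D(p̄, q) + ⟪p - p̄, ∇F p̄ - ∇F q⟫`
summed over the points `pᵢ` kills the last term exactly when `p̄` is their mean, so
`∑ D(pᵢ, q) = ∑ D(pᵢ, p̄) + n D(p̄, q)`. By the strict gradient inequality of a strictly convex
function, `D(p̄, q) > 0` for `q ≠ p̄`.
-/

section GradientInequality

variable {E : Type*} [NormedAddCommGroup E] [NormedSpace ℝ E] {s : Set E} {f : E → ℝ}
  {f' : E →L[ℝ] ℝ} {x y : E}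

theorem ConvexOn.add_fderiv_sub_le (hf : ConvexOn ℝ s f) (hx : x ∈ s) (hy : y ∈ s)
    (hf' : HasFDerivAt f f' x) : f x + f' (y - x) ≤ f y := by
  have hline : HasDerivAt (f ∘ AffineMap.lineMap (k := ℝ) x y) (f' (y - x)) 0 := by
    have hf'0 : HasFDerivAt f f' (AffineMap.lineMap (k := ℝ) x y (0 : ℝ)) := by
      rwa [AffineMap.lineMap_apply_zero]
    exact hf'0.comp_hasDerivAt (0 : ℝ) AffineMap.hasDerivAt_lineMap
  have hslope := (hf.comp_affineMap (AffineMap.lineMap (k := ℝ) x y)).le_slope_of_hasDerivAt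
    (by simpa using hx) (by simpa using hy) zero_lt_one hline
  simp only [slope_def_field, Function.comp_apply, AffineMap.lineMap_apply_zero,
    AffineMap.lineMap_apply_one, sub_zero, div_one] at hslope
  linarith

theorem StrictConvexOn.add_fderiv_sub_lt (hf : StrictConvexOn ℝ s f) (hx : x ∈ s) (hy : y ∈ s)
    (hxy : x ≠ y) (hf' : HasFDerivAt f f' x) : f x + f' (y - x) < f y := by
  set m : E := (1 / 2 : ℝ) • x + (1 / 2 : ℝ) • y
  have hm : m ∈ s := hf.1 hx hy (by norm_num) (by norm_num) (by norm_num)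
  have hfm : f m < (1 / 2 : ℝ) * f x + (1 / 2 : ℝ) * f y :=
    hf.2 hx hy hxy (by norm_num) (by norm_num) (by norm_num)
  have hsub : m - x = (1 / 2 : ℝ) • (y - x) := by module
  have := hf.convexOn.add_fderiv_sub_le hx hm hf'
  rw [hsub, map_smul, smul_eq_mul] at this
  linarith

end GradientInequality

section Bregman

variable {d : ℕ} {F : EuclideanSpace ℝ (Fin d) → ℝ}
  {F' : EuclideanSpace ℝ (Fin d) → EuclideanSpace ℝ (Fin d)}

theorem bregman_self (p : EuclideanSpace ℝ (Fin d)) : bregman F F' p p = 0 := by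
  simp [bregman]

theorem bregman_pos {X : Set (EuclideanSpace ℝ (Fin d))} (hF : StrictConvexOn ℝ X F)
    {p q : EuclideanSpace ℝ (Fin d)} (hp : p ∈ X) (hq : q ∈ X) (hpq : p ≠ q)
    (hF'q : HasGradientAt F (F' q) q) : 0 < bregman F F' p q := by
  have := hF.add_fderiv_sub_lt hq hp hpq.symm hF'q.hasFDerivAt
  rw [InnerProductSpace.toDual_apply_apply, real_inner_comm] at this
  unfold bregman
  linarith

theorem bregman_nonneg {X : Set (EuclideanSpace ℝ (Fin d))} (hF : StrictConvexOn ℝ X F)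
    {p q : EuclideanSpace ℝ (Fin d)} (hp : p ∈ X) (hq : q ∈ X)
    (hF'q : HasGradientAt F (F' q) q) : 0 ≤ bregman F F' p q := by
  rcases eq_or_ne p q with rfl | hpq
  · rw [bregman_self]
  · exact (bregman_pos hF hp hq hpq hF'q).le

theorem bregman_eq_add_add_inner (p q r : EuclideanSpace ℝ (Fin d)) :
    bregman F F' p q = bregman F F' p r + bregman F F' r q + ⟪p - r, F' r - F' q⟫ := by
  simp only [bregman, inner_sub_left, inner_sub_right]
  ring

theorem sum_bregman_eq_sum_bregman_add_card_mul {ι : Type*} [Fintype ι]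
    (p : ι → EuclideanSpace ℝ (Fin d)) {pbar : EuclideanSpace ℝ (Fin d)}
    (hsum : ∑ i, p i = (Fintype.card ι : ℝ) • pbar) (q : EuclideanSpace ℝ (Fin d)) :
    ∑ i, bregman F F' (p i) q =
      ∑ i, bregman F F' (p i) pbar + Fintype.card ι * bregman F F' pbar q := by
  have hcentered : ∑ i, (p i - pbar) = 0 := by
    rw [Finset.sum_sub_distrib, hsum, Finset.sum_const, Finset.card_univ, Nat.cast_smul_eq_nsmul,
      sub_self]
  rw [Finset.sum_congr rfl fun i _ => bregman_eq_add_add_inner (p i) q pbar,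
    Finset.sum_add_distrib, Finset.sum_add_distrib, ← sum_inner, hcentered, inner_zero_left,
    Finset.sum_const, Finset.card_univ, nsmul_eq_mul, add_zero]

end Bregman

theorem right_bregman_centroid_is_center_of_mass_general {d n : ℕ} (hn : 0 < n)
    {X : Set (EuclideanSpace ℝ (Fin d))}
    {F : EuclideanSpace ℝ (Fin d) → ℝ}
    {F' : EuclideanSpace ℝ (Fin d) → EuclideanSpace ℝ (Fin d)}
    (hF : StrictConvexOn ℝ X F)
    (hF' : ∀ x ∈ X, HasGradientAt F (F' x) x)
    (p : Fin n → EuclideanSpace ℝ (Fin d)) (hp : ∀ i, p i ∈ X)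
    (pbar : EuclideanSpace ℝ (Fin d)) (hpbar : pbar = (n : ℝ)⁻¹ • ∑ i, p i) :
    (∀ q ∈ X, (n : ℝ)⁻¹ * ∑ i, bregman F F' (p i) pbar ≤
        (n : ℝ)⁻¹ * ∑ i, bregman F F' (p i) q) ∧
    (∀ q ∈ X, (n : ℝ)⁻¹ * ∑ i, bregman F F' (p i) pbar =
        (n : ℝ)⁻¹ * ∑ i, bregman F F' (p i) q → q = pbar) := by
  have hn0 : (n : ℝ) ≠ 0 := by positivity
  have hsum : ∑ i, p i = (Fintype.card (Fin n) : ℝ) • pbar := by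
    rw [Fintype.card_fin, hpbar, smul_inv_smul₀ hn0]
  have hpbarX : pbar ∈ X := by
    rw [hpbar, Finset.smul_sum]
    exact hF.1.sum_mem (fun _ _ => by positivity) (by simp [hn0]) (fun i _ => hp i)
  have hsplit (q) := sum_bregman_eq_sum_bregman_add_card_mul (F := F) (F' := F') p hsum q
  simp only [Fintype.card_fin] at hsplit
  refine ⟨fun q hq => ?_, fun q hq heq => ?_⟩
  · rw [hsplit q]
    gcongr
    exact le_add_of_nonneg_right <|
      mul_nonneg n.cast_nonneg (bregman_nonneg hF hpbarX hq (hF' q hq))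
  · by_contra hne
    have := bregman_pos hF hpbarX hq (Ne.symm hne) (hF' q hq)
    rw [hsplit q, mul_add, inv_mul_cancel_left₀ hn0] at heq
    linarith

/-- The right-sided Bregman centroid is the center of mass, for any generator `F`. -/
theorem right_bregman_centroid_is_center_of_mass {d n : ℕ} (hn : 0 < n)
    {X : Set (EuclideanSpace ℝ (Fin d))} (hXopen : IsOpen X) (hXconv : Convex ℝ X)
    {F : EuclideanSpace ℝ (Fin d) → ℝ}
    {F' : EuclideanSpace ℝ (Fin d) → EuclideanSpace ℝ (Fin d)}
    (hF : StrictConvexOn ℝ X F)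
    (hF' : ∀ x ∈ X, HasGradientAt F (F' x) x)
    (p : Fin n → EuclideanSpace ℝ (Fin d)) (hp : ∀ i, p i ∈ X)
    (pbar : EuclideanSpace ℝ (Fin d)) (hpbar : pbar = (n : ℝ)⁻¹ • ∑ i, p i) :
    (∀ q ∈ X, (n : ℝ)⁻¹ * ∑ i, bregman F F' (p i) pbar ≤
        (n : ℝ)⁻¹ * ∑ i, bregman F F' (p i) q) ∧
    (∀ q ∈ X, (n : ℝ)⁻¹ * ∑ i, bregman F F' (p i) pbar =
        (n : ℝ)⁻¹ * ∑ i, bregman F F' (p i) q → q = pbar) :=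
  right_bregman_centroid_is_center_of_mass_general hn hF hF' p hp pbar hpbar
end

section
/- The left-sided Bregman centroid, i.e., the unique minimizer over c ∈ X of (1/n)∑_{i=1}^n D_F(c‖p_i), equals (∇F)^{−1}((1/n)∑_{i=1}^n ∇F(p_i)), the ∇F-generalized mean of the points. -/
/-!
By the three-point identity
`D(c, pᵢ) = D(q, pᵢ) + D(c, q) + ⟪c - q, ∇F q - ∇F pᵢ⟫`, averaging over `i` with `q = cL`
kills the cross terms, because `∇F cL` is the mean of the `∇F pᵢ`. Hence the average divergence
from `c` exceeds the one from `cL` by exactly `D(c, cL)`, which the first-order characterisation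
of strict convexity shows to be nonnegative and zero only at `c = cL`.
-/

open scoped RealInnerProductSpace

section GradientInequality

variable {E : Type*} [NormedAddCommGroup E] [InnerProductSpace ℝ E] [CompleteSpace E]
  {s : Set E} {f : E → ℝ} {x z g : E}

theorem HasGradientAt.hasDerivAt_comp_lineMap (hg : HasGradientAt f g x) :
    HasDerivAt (f ∘ AffineMap.lineMap (k := ℝ) x z) ⟪z - x, g⟫ 0 := by
  have hf : HasFDerivAt f (InnerProductSpace.toDual ℝ E g) (AffineMap.lineMap x z (0 : ℝ)) := by
    simpa using hg.hasFDerivAt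
  simpa [real_inner_comm] using hf.comp_hasDerivAt (0 : ℝ) AffineMap.hasDerivAt_lineMap

theorem ConvexOn.add_inner_le_of_hasGradientAt (hf : ConvexOn ℝ s f) (hx : x ∈ s) (hz : z ∈ s)
    (hg : HasGradientAt f g x) : f x + ⟪z - x, g⟫ ≤ f z := by
  have hline : ConvexOn ℝ (Set.Icc 0 1) (f ∘ AffineMap.lineMap (k := ℝ) x z) :=
    (hf.comp_affineMap (AffineMap.lineMap x z)).subset (hf.1.mapsTo_lineMap hx hz) (convex_Icc 0 1)
  have hslope := hline.le_slope_of_hasDerivAt (by simp) (by simp) one_pos hg.hasDerivAt_comp_lineMap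
  simp only [slope, sub_zero, inv_one, Function.comp_apply, AffineMap.lineMap_apply_one,
    AffineMap.lineMap_apply_zero, vsub_eq_sub, smul_eq_mul, one_mul] at hslope
  linarith

theorem StrictConvexOn.add_inner_lt_of_hasGradientAt (hf : StrictConvexOn ℝ s f) (hx : x ∈ s)
    (hz : z ∈ s) (hzx : z ≠ x) (hg : HasGradientAt f g x) : f x + ⟪z - x, g⟫ < f z := by
  set m := (2 : ℝ)⁻¹ • x + (2 : ℝ)⁻¹ • z
  have hm : m ∈ s := hf.1 hx hz (by norm_num) (by norm_num) (by norm_num)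
  have hfm : f m < (2 : ℝ)⁻¹ * f x + (2 : ℝ)⁻¹ * f z :=
    hf.2 hx hz hzx.symm (by norm_num) (by norm_num) (by norm_num)
  have hmx : m - x = (2 : ℝ)⁻¹ • (z - x) := by module
  have hfm_ge := hf.convexOn.add_inner_le_of_hasGradientAt hx hm hg
  rw [hmx, real_inner_smul_left] at hfm_ge
  linarith

end GradientInequality

section Bregman

variable {d : ℕ}

theorem bregman_three_point (F : EuclideanSpace ℝ (Fin d) → ℝ)
    (F' : EuclideanSpace ℝ (Fin d) → EuclideanSpace ℝ (Fin d)) (c q p : EuclideanSpace ℝ (Fin d)) :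
    bregman F F' c p = bregman F F' q p + bregman F F' c q + ⟪c - q, F' q - F' p⟫ := by
  have hsplit : ⟪c - p, F' p⟫ = ⟪q - p, F' p⟫ + ⟪c - q, F' p⟫ := by
    rw [← inner_add_left, sub_add_sub_cancel']
  simp only [bregman, inner_sub_right]
  linarith

variable {X : Set (EuclideanSpace ℝ (Fin d))} {F : EuclideanSpace ℝ (Fin d) → ℝ}
  {F' : EuclideanSpace ℝ (Fin d) → EuclideanSpace ℝ (Fin d)} {c q : EuclideanSpace ℝ (Fin d)}

theorem bregman_nonneg_s5 (hF : ConvexOn ℝ X F) (hc : c ∈ X) (hq : q ∈ X)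
    (hF' : HasGradientAt F (F' q) q) : 0 ≤ bregman F F' c q := by
  have hgrad := hF.add_inner_le_of_hasGradientAt hq hc hF'
  unfold bregman
  linarith

theorem bregman_pos_s5 (hF : StrictConvexOn ℝ X F) (hc : c ∈ X) (hq : q ∈ X) (hcq : c ≠ q)
    (hF' : HasGradientAt F (F' q) q) : 0 < bregman F F' c q := by
  have hgrad := hF.add_inner_lt_of_hasGradientAt hq hc hcq hF'
  unfold bregman
  linarith

theorem sum_mul_bregman_eq_add_bregman {ι : Type*} (s : Finset ι) (w : ι → ℝ)
    (hw : ∑ i ∈ s, w i = 1) (p : ι → EuclideanSpace ℝ (Fin d))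
    (hq : F' q = ∑ i ∈ s, w i • F' (p i)) :
    ∑ i ∈ s, w i * bregman F F' c (p i) =
      ∑ i ∈ s, w i * bregman F F' q (p i) + bregman F F' c q := by
  have hcross : ∑ i ∈ s, w i * ⟪c - q, F' q - F' (p i)⟫ = 0 := by
    simp_rw [← real_inner_smul_right, ← inner_sum, smul_sub, Finset.sum_sub_distrib,
      ← Finset.sum_smul, hw, one_smul, hq, sub_self, inner_zero_right]
  calc ∑ i ∈ s, w i * bregman F F' c (p i)
      = ∑ i ∈ s, (w i * bregman F F' q (p i) + w i * bregman F F' c q +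
          w i * ⟪c - q, F' q - F' (p i)⟫) :=
        Finset.sum_congr rfl fun i _ => by rw [bregman_three_point F F' c q]; ring
    _ = ∑ i ∈ s, w i * bregman F F' q (p i) + (∑ i ∈ s, w i) * bregman F F' c q +
          ∑ i ∈ s, w i * ⟪c - q, F' q - F' (p i)⟫ := by
        rw [Finset.sum_add_distrib, Finset.sum_add_distrib, Finset.sum_mul]
    _ = ∑ i ∈ s, w i * bregman F F' q (p i) + bregman F F' c q := by
        rw [hw, hcross, one_mul, add_zero]

end Bregman

theorem left_bregman_centroid_is_gradient_mean_general {d n : ℕ} (hn : 0 < n)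
    {X : Set (EuclideanSpace ℝ (Fin d))}
    {F : EuclideanSpace ℝ (Fin d) → ℝ}
    {F' : EuclideanSpace ℝ (Fin d) → EuclideanSpace ℝ (Fin d)}
    (hF : StrictConvexOn ℝ X F)
    (hF' : ∀ x ∈ X, HasGradientAt F (F' x) x)
    (p : Fin n → EuclideanSpace ℝ (Fin d))
    (cL : EuclideanSpace ℝ (Fin d)) (hcL : cL ∈ X)
    -- `cL = (∇F)⁻¹((1/n) ∑ ∇F(pᵢ))`
    (hcLmean : F' cL = (n : ℝ)⁻¹ • ∑ i, F' (p i)) :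
    (∀ c ∈ X, (n : ℝ)⁻¹ * ∑ i, bregman F F' cL (p i) ≤
        (n : ℝ)⁻¹ * ∑ i, bregman F F' c (p i)) ∧
    (∀ c ∈ X, (n : ℝ)⁻¹ * ∑ i, bregman F F' cL (p i) =
        (n : ℝ)⁻¹ * ∑ i, bregman F F' c (p i) → c = cL) := by
  have hw : ∑ _i : Fin n, (n : ℝ)⁻¹ = 1 := by simp [hn.ne']
  have hsplit (c) : (n : ℝ)⁻¹ * ∑ i, bregman F F' c (p i) =
      (n : ℝ)⁻¹ * ∑ i, bregman F F' cL (p i) + bregman F F' c cL := by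
    simp only [Finset.mul_sum]
    exact sum_mul_bregman_eq_add_bregman _ _ hw p (by rw [hcLmean, Finset.smul_sum])
  refine ⟨fun c hc => ?_, fun c hc heq => ?_⟩
  · rw [hsplit c]
    linarith [bregman_nonneg_s5 hF.convexOn hc hcL (hF' cL hcL)]
  · by_contra hne
    rw [hsplit c] at heq
    linarith [bregman_pos_s5 hF hc hcL hne (hF' cL hcL)]

/-- The left-sided Bregman centroid is the `∇F`-generalized mean
`(∇F)⁻¹((1/n)∑ ∇F(pᵢ))`: it is the unique minimizer of the average left divergence. -/
theorem left_bregman_centroid_is_gradient_mean {d n : ℕ} (hn : 0 < n)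
    {X Y : Set (EuclideanSpace ℝ (Fin d))} (hXopen : IsOpen X) (hXconv : Convex ℝ X)
    {F : EuclideanSpace ℝ (Fin d) → ℝ}
    {F' : EuclideanSpace ℝ (Fin d) → EuclideanSpace ℝ (Fin d)}
    (hF : StrictConvexOn ℝ X F)
    (hF' : ∀ x ∈ X, HasGradientAt F (F' x) x)
    (hbij : Set.BijOn F' X Y)
    (p : Fin n → EuclideanSpace ℝ (Fin d)) (hp : ∀ i, p i ∈ X)
    (cL : EuclideanSpace ℝ (Fin d)) (hcL : cL ∈ X)
    -- `cL = (∇F)⁻¹((1/n) ∑ ∇F(pᵢ))`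
    (hcLmean : F' cL = (n : ℝ)⁻¹ • ∑ i, F' (p i)) :
    (∀ c ∈ X, (n : ℝ)⁻¹ * ∑ i, bregman F F' cL (p i) ≤
        (n : ℝ)⁻¹ * ∑ i, bregman F F' c (p i)) ∧
    (∀ c ∈ X, (n : ℝ)⁻¹ * ∑ i, bregman F F' cL (p i) =
        (n : ℝ)⁻¹ * ∑ i, bregman F F' c (p i) → c = cL) :=
  left_bregman_centroid_is_gradient_mean_general hn hF hF' p cL hcL hcLmean
end
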